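/- arXiv:math/0407532 — 3 statements merged into one kernel-verified Lean document; each statement's English description precedes it below -/
import Mathlib

section
/- There exists a constant C > 0, depending only on m, δ and A, such that for every finite positive Borel measure μ on ℝ^m the function Pμ is defined μ-almost everywhere, belongs to L^{1+δ}(ℝ^m), and satisfies ‖Pμ‖_{L^{1+δ}} ≤ C · μ(ℝ^m). In particular the linear operator P maps finite measures continuously into L^{1+δ}. -/
open MeasureTheory Metric Set
open scoped ENNReal NNReal

private lemma J_lt_top (m : ℕ) (hm : 3 ≤ m) {s : ℝ} (hs : -(m : ℝ) < s) (hs0 : s < 0) :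
    ∫⁻ z in Metric.ball (0 : EuclideanSpace ℝ (Fin m)) 2, ENNReal.ofReal (‖z‖ ^ s) ∂volume < ⊤ := by
  have hm0 : 0 < m := by omega
  haveI : Nonempty (Fin m) := ⟨⟨0, hm0⟩⟩
  have hfin : Module.finrank ℝ (EuclideanSpace ℝ (Fin m)) = m := finrank_euclideanSpace_fin
  set E := EuclideanSpace ℝ (Fin m)
  set g : E → ℝ≥0∞ := fun z => ENNReal.ofReal (‖z‖ ^ s) with hg
  set Ann : ℕ → Set E := fun n =>
    Metric.ball 0 (2 * (2 : ℝ)⁻¹ ^ n) \ Metric.ball 0 ((2 : ℝ)⁻¹ ^ n) with hAnn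
  set vB : ℝ≥0∞ := volume (Metric.ball (0 : E) 1) with hvB
  have hvB_fin : vB < ⊤ := measure_ball_lt_top
  set t : ℝ≥0∞ := ENNReal.ofReal ((2 : ℝ)⁻¹ ^ (s + m)) with ht
  have ht1 : t < 1 := by
    rw [ht, ← ENNReal.ofReal_one]
    exact (ENNReal.ofReal_lt_ofReal_iff (by norm_num)).2
      (Real.rpow_lt_one (by norm_num) (by norm_num) (by linarith))
  have hcover : Metric.ball (0 : E) 2 ⊆ {0} ∪ ⋃ n, Ann n := by
    intro z hz
    rcases eq_or_ne z 0 with rfl | hz0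
    · exact Or.inl rfl
    · right
      have hz2 : ‖z‖ < 2 := mem_ball_zero_iff.1 hz
      have hzpos : 0 < ‖z‖ := norm_pos_iff.2 hz0
      have hex : ∃ n : ℕ, (2 : ℝ)⁻¹ ^ n ≤ ‖z‖ := by
        obtain ⟨n, hn⟩ := exists_pow_lt_of_lt_one hzpos (by norm_num : (2 : ℝ)⁻¹ < 1)
        exact ⟨n, hn.le⟩
      refine Set.mem_iUnion.2 ⟨Nat.find hex, ?_, ?_⟩
      · rw [mem_ball_zero_iff]
        rcases Nat.eq_zero_or_pos (Nat.find hex) with h0 | hpos'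
        · rw [h0]; simpa using hz2
        · have hmin := Nat.find_min hex (Nat.sub_lt hpos' one_pos)
          have hEq : 2 * (2 : ℝ)⁻¹ ^ Nat.find hex = (2 : ℝ)⁻¹ ^ (Nat.find hex - 1) := by
            rw [← Nat.succ_pred_eq_of_pos hpos', pow_succ, Nat.succ_sub_one]
            ring
          have h5 := not_le.1 hmin
          linarith
      · simp only [Metric.mem_ball, not_lt, dist_zero_right]
        simpa using Nat.find_spec hex
  have hAnnBound : ∀ n, ∫⁻ z in Ann n, g z ∂volume ≤
      (ENNReal.ofReal ((2 : ℝ) ^ m) * vB) * t ^ n := by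
    intro n
    set r : ℝ := (2 : ℝ)⁻¹ ^ n with hr
    have hr0 : 0 < r := by positivity
    have step1 : ∫⁻ z in Ann n, g z ∂volume ≤ ∫⁻ _ in Ann n, ENNReal.ofReal (r ^ s) ∂volume := by
      refine setLIntegral_mono measurable_const fun z hz => ?_
      have hzr : r ≤ ‖z‖ := by
        have := hz.2
        simpa only [Metric.mem_ball, not_lt, dist_zero_right] using this
      exact ENNReal.ofReal_le_ofReal (Real.rpow_le_rpow_of_nonpos hr0 hzr hs0.le)
    have step2 : ∫⁻ _ in Ann n, ENNReal.ofReal (r ^ s) ∂volume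
        ≤ ENNReal.ofReal (r ^ s) * volume (Metric.ball (0 : E) (2 * r)) := by
      rw [setLIntegral_const]
      exact mul_le_mul_right (measure_mono Set.diff_subset) _
    have step3 : volume (Metric.ball (0 : E) (2 * r)) = ENNReal.ofReal ((2 * r) ^ m) * vB := by
      rw [Measure.addHaar_ball_of_pos _ _ (by positivity), hfin]
    have key : ENNReal.ofReal (r ^ s) * (ENNReal.ofReal ((2 * r) ^ m) * vB)
        = (ENNReal.ofReal ((2 : ℝ) ^ m) * vB) * t ^ n := by
      have h1 : r ^ s * (2 * r) ^ m = (2 : ℝ) ^ m * ((2 : ℝ)⁻¹ ^ (s + m)) ^ n := by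
        rw [mul_pow]
        have h2 : r ^ s * r ^ m = r ^ (s + m) := by
          rw [← Real.rpow_natCast r m, ← Real.rpow_add hr0]
        have h3 : r ^ (s + (m : ℝ)) = ((2 : ℝ)⁻¹ ^ (s + m)) ^ n := by
          rw [hr, ← Real.rpow_natCast (2 : ℝ)⁻¹ n, ← Real.rpow_mul (by norm_num),
            mul_comm, Real.rpow_mul (by norm_num), Real.rpow_natCast]
        calc r ^ s * ((2:ℝ) ^ m * r ^ m) = (2:ℝ) ^ m * (r ^ s * r ^ m) := by ring
        _ = (2:ℝ) ^ m * ((2 : ℝ)⁻¹ ^ (s + m)) ^ n := by rw [h2, h3]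
      have h2 : ENNReal.ofReal ((2:ℝ) ^ m * ((2 : ℝ)⁻¹ ^ (s + m)) ^ n)
          = ENNReal.ofReal ((2:ℝ) ^ m) * t ^ n := by
        rw [ENNReal.ofReal_mul (by positivity), ht,
          ENNReal.ofReal_pow (show (0:ℝ) ≤ (2 : ℝ)⁻¹ ^ (s + (m:ℝ)) by positivity)]
      rw [← mul_assoc, ← ENNReal.ofReal_mul (by positivity), h1, h2]
      ring
    calc ∫⁻ z in Ann n, g z ∂volume ≤ ENNReal.ofReal (r ^ s) * volume (Metric.ball (0 : E) (2 * r)) :=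
          step1.trans step2
      _ = (ENNReal.ofReal ((2 : ℝ) ^ m) * vB) * t ^ n := by rw [step3, key]
  have hsing : ∫⁻ z in ({0} : Set E), g z ∂volume = 0 := by
    rw [lintegral_singleton]
    simp [hg, Real.zero_rpow hs0.ne]
  calc ∫⁻ z in Metric.ball (0 : E) 2, g z ∂volume
      ≤ ∫⁻ z in ({0} : Set E) ∪ ⋃ n, Ann n, g z ∂volume := lintegral_mono_set hcover
    _ ≤ (∫⁻ z in ({0} : Set E), g z ∂volume) + ∫⁻ z in ⋃ n, Ann n, g z ∂volume :=
        lintegral_union_le _ _ _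
    _ ≤ 0 + ∑' n, ∫⁻ z in Ann n, g z ∂volume := by
        rw [hsing]; exact add_le_add le_rfl (lintegral_iUnion_le _ _)
    _ ≤ ∑' n, (ENNReal.ofReal ((2 : ℝ) ^ m) * vB) * t ^ n := by
        rw [zero_add]; exact ENNReal.tsum_le_tsum hAnnBound
    _ = (ENNReal.ofReal ((2 : ℝ) ^ m) * vB) * ∑' n, t ^ n := ENNReal.tsum_mul_left
    _ < ⊤ := by
        rw [ENNReal.tsum_geometric]
        refine ENNReal.mul_lt_top (ENNReal.mul_lt_top ENNReal.ofReal_lt_top hvB_fin) ?_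
        exact ENNReal.inv_lt_top.2 (tsub_pos_of_lt ht1)

private lemma trans_int (m : ℕ) (y : EuclideanSpace ℝ (Fin m)) (s : ℝ) :
    ∫⁻ x in Metric.ball y 2, ENNReal.ofReal (‖x - y‖ ^ s) ∂volume
      = ∫⁻ z in Metric.ball (0 : EuclideanSpace ℝ (Fin m)) 2, ENNReal.ofReal (‖z‖ ^ s) ∂volume := by
  have hind : ∀ x : EuclideanSpace ℝ (Fin m), (Metric.ball y 2).indicator (fun x => ENNReal.ofReal (‖x - y‖ ^ s)) x
      = (Metric.ball (0 : EuclideanSpace ℝ (Fin m)) 2).indicator (fun z => ENNReal.ofReal (‖z‖ ^ s)) (x - y) := by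
    intro x
    by_cases hx : x ∈ Metric.ball y 2
    · have hx' : x - y ∈ Metric.ball (0 : EuclideanSpace ℝ (Fin m)) 2 := by
        rw [mem_ball_zero_iff]; exact mem_ball_iff_norm.1 hx
      rw [Set.indicator_of_mem hx, Set.indicator_of_mem hx']
    · have hx' : x - y ∉ Metric.ball (0 : EuclideanSpace ℝ (Fin m)) 2 := by
        rw [mem_ball_zero_iff]; exact fun h => hx (mem_ball_iff_norm.2 h)
      rw [Set.indicator_of_notMem hx, Set.indicator_of_notMem hx']
  rw [← lintegral_indicator measurableSet_ball, ← lintegral_indicator measurableSet_ball]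
  simp_rw [hind]
  exact lintegral_sub_right_eq_self
    (fun z => (Metric.ball (0 : EuclideanSpace ℝ (Fin m)) 2).indicator (fun z => ENNReal.ofReal (‖z‖ ^ s)) z) y

private lemma kernel_bound (m : ℕ) (hm : 3 ≤ m) {A : ℝ} (hA : 0 < A)
    (K : EuclideanSpace ℝ (Fin m) → EuclideanSpace ℝ (Fin m) → ℝ)
    (hKsupp : ∀ x y, ¬(x ∈ Metric.ball (0 : EuclideanSpace ℝ (Fin m)) 1 ∧
        y ∈ Metric.ball (0 : EuclideanSpace ℝ (Fin m)) 1) → K x y = 0)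
    (hKbd : ∀ x y, x ≠ y → |K x y| ≤ A * ‖x - y‖ ^ (2 - (m : ℝ)))
    {r : ℝ} (hr1 : 1 ≤ r) (y : EuclideanSpace ℝ (Fin m)) :
    ∫⁻ x, ((‖K x y‖₊ : ℝ≥0∞)) ^ r ∂volume ≤
      ENNReal.ofReal (A ^ r) *
        ∫⁻ z in Metric.ball (0 : EuclideanSpace ℝ (Fin m)) 2,
          ENNReal.ofReal (‖z‖ ^ ((2 - (m : ℝ)) * r)) ∂volume := by
  have hm0 : 0 < m := by omega
  haveI : Nonempty (Fin m) := ⟨⟨0, hm0⟩⟩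
  have hr0 : 0 < r := lt_of_lt_of_le one_pos hr1
  set s : ℝ := (2 - (m : ℝ)) * r with hs
  have hy0 : (volume : Measure (EuclideanSpace ℝ (Fin m))) {y} = 0 := measure_singleton y
  have key : ∀ᵐ x ∂(volume : Measure (EuclideanSpace ℝ (Fin m))), ((‖K x y‖₊ : ℝ≥0∞)) ^ r ≤
      (Metric.ball y 2).indicator
        (fun x => ENNReal.ofReal (A ^ r) * ENNReal.ofReal (‖x - y‖ ^ s)) x := by
    filter_upwards [compl_mem_ae_iff.2 hy0] with x hx
    have hxy : x ≠ y := hx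
    by_cases hb : x ∈ Metric.ball (0 : EuclideanSpace ℝ (Fin m)) 1 ∧ y ∈ Metric.ball (0 : EuclideanSpace ℝ (Fin m)) 1
    · have hxy2 : x ∈ Metric.ball y 2 := by
        rw [mem_ball_iff_norm]
        calc ‖x - y‖ ≤ ‖x‖ + ‖y‖ := norm_sub_le _ _
          _ < 2 := by
            have h1 := mem_ball_zero_iff.1 hb.1
            have h2 := mem_ball_zero_iff.1 hb.2
            linarith
      rw [Set.indicator_of_mem hxy2]
      have hnorm : (0 : ℝ) < ‖x - y‖ := by
        rw [norm_pos_iff]; exact sub_ne_zero_of_ne hxy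
      calc ((‖K x y‖₊ : ℝ≥0∞)) ^ r = (ENNReal.ofReal |K x y|) ^ r := by
            rw [← enorm_eq_nnnorm, Real.enorm_eq_ofReal_abs]
        _ ≤ (ENNReal.ofReal (A * ‖x - y‖ ^ (2 - (m : ℝ)))) ^ r :=
            ENNReal.rpow_le_rpow (ENNReal.ofReal_le_ofReal (hKbd x y hxy)) hr0.le
        _ = ENNReal.ofReal ((A * ‖x - y‖ ^ (2 - (m : ℝ))) ^ r) := by
            rw [ENNReal.ofReal_rpow_of_nonneg (by positivity) hr0.le]
        _ = ENNReal.ofReal (A ^ r) * ENNReal.ofReal (‖x - y‖ ^ s) := by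
            rw [Real.mul_rpow hA.le (by positivity), ← Real.rpow_mul hnorm.le,
              ENNReal.ofReal_mul (by positivity)]
    · rw [hKsupp x y hb]
      simp only [nnnorm_zero, ENNReal.coe_zero]
      rw [ENNReal.zero_rpow_of_pos hr0]
      exact zero_le
  calc ∫⁻ x, ((‖K x y‖₊ : ℝ≥0∞)) ^ r ∂volume
      ≤ ∫⁻ x, (Metric.ball y 2).indicator
          (fun x => ENNReal.ofReal (A ^ r) * ENNReal.ofReal (‖x - y‖ ^ s)) x ∂volume :=
        lintegral_mono_ae key
    _ = ∫⁻ x in Metric.ball y 2,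
          ENNReal.ofReal (A ^ r) * ENNReal.ofReal (‖x - y‖ ^ s) ∂volume :=
        lintegral_indicator measurableSet_ball _
    _ = ENNReal.ofReal (A ^ r) * ∫⁻ x in Metric.ball y 2, ENNReal.ofReal (‖x - y‖ ^ s) ∂volume :=
        lintegral_const_mul' _ _ ENNReal.ofReal_ne_top
    _ = ENNReal.ofReal (A ^ r) *
          ∫⁻ z in Metric.ball (0 : EuclideanSpace ℝ (Fin m)) 2, ENNReal.ofReal (‖z‖ ^ s) ∂volume := by
        rw [trans_int]

/-- Lemma 2.1, first assertion: the kernel operator `P` maps finite measures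
continuously into `L^{1+δ}`. -/
theorem stmt1 (m : ℕ) (hm : 3 ≤ m) (δ A : ℝ) (hδ : 0 < δ) (hδ' : δ < 2 / ((m : ℝ) - 2))
    (hA : 0 < A)
    (K : EuclideanSpace ℝ (Fin m) → EuclideanSpace ℝ (Fin m) → ℝ)
    (hKmeas : Measurable (Function.uncurry K))
    (hKsupp : ∀ x y, ¬(x ∈ Metric.ball (0 : EuclideanSpace ℝ (Fin m)) 1 ∧
        y ∈ Metric.ball (0 : EuclideanSpace ℝ (Fin m)) 1) → K x y = 0)
    (hKbd : ∀ x y, x ≠ y → |K x y| ≤ A * ‖x - y‖ ^ (2 - (m : ℝ))) :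
    ∃ C : ℝ, 0 < C ∧
      ∀ μ : Measure (EuclideanSpace ℝ (Fin m)), IsFiniteMeasure μ →
        (∀ᵐ x ∂(volume : Measure (EuclideanSpace ℝ (Fin m))),
          Integrable (fun y => K x y) μ) ∧
        MemLp (fun x => ∫ y, K x y ∂μ) (ENNReal.ofReal (1 + δ)) volume ∧
        eLpNorm (fun x => ∫ y, K x y ∂μ) (ENNReal.ofReal (1 + δ)) volume ≤
          ENNReal.ofReal C * μ Set.univ := by
  have hm2 : (2 : ℝ) < (m : ℝ) := by exact_mod_cast (by omega : 2 < m)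
  have hm0 : 0 < m := by omega
  haveI : Nonempty (Fin m) := ⟨⟨0, hm0⟩⟩
  set p : ℝ := 1 + δ with hp
  have hp1 : 1 < p := by rw [hp]; linarith
  have hp0 : 0 < p := by linarith
  have hδm : δ * ((m : ℝ) - 2) < 2 := by
    have h2 : (0 : ℝ) < (m : ℝ) - 2 := by linarith
    calc δ * ((m : ℝ) - 2) < (2 / ((m : ℝ) - 2)) * ((m : ℝ) - 2) :=
          mul_lt_mul_of_pos_right hδ' h2
      _ = 2 := by field_simp
  have hs1 : -(m : ℝ) < (2 - (m : ℝ)) := by linarith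
  have hs1' : (2 - (m : ℝ)) < 0 := by linarith
  have hsp : -(m : ℝ) < (2 - (m : ℝ)) * p := by rw [hp]; nlinarith
  have hsp' : (2 - (m : ℝ)) * p < 0 := by nlinarith
  set J1 : ℝ≥0∞ := ∫⁻ z in Metric.ball (0 : EuclideanSpace ℝ (Fin m)) 2,
    ENNReal.ofReal (‖z‖ ^ (2 - (m : ℝ))) ∂volume with hJ1def
  set Jp : ℝ≥0∞ := ∫⁻ z in Metric.ball (0 : EuclideanSpace ℝ (Fin m)) 2,
    ENNReal.ofReal (‖z‖ ^ ((2 - (m : ℝ)) * p)) ∂volume with hJpdef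
  have hJ1 : J1 < ⊤ := J_lt_top m hm hs1 hs1'
  have hJp : Jp < ⊤ := J_lt_top m hm hsp hsp'
  set B : ℝ≥0∞ := ENNReal.ofReal (A ^ p) * Jp with hBdef
  have hBne : B ≠ ⊤ := ENNReal.mul_ne_top ENNReal.ofReal_ne_top hJp.ne
  have hBpne : B ^ (1 / p) ≠ ⊤ := ENNReal.rpow_ne_top_of_nonneg (by positivity) hBne
  refine ⟨(B ^ (1 / p)).toReal + 1, by positivity, ?_⟩
  intro μ hμ
  have hFmeas : Measurable (Function.uncurry fun x y => ((‖K x y‖₊ : ℝ≥0∞))) :=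
    hKmeas.enorm
  have hFx : ∀ x, Measurable fun y => ((‖K x y‖₊ : ℝ≥0∞)) := fun x =>
    (hKmeas.of_uncurry_left).enorm
  have hswap1 : ∫⁻ x, (∫⁻ y, (‖K x y‖₊ : ℝ≥0∞) ∂μ) ∂volume
      = ∫⁻ y, (∫⁻ x, (‖K x y‖₊ : ℝ≥0∞) ∂volume) ∂μ :=
    lintegral_lintegral_swap hFmeas.aemeasurable
  have hS1 : ∫⁻ x, (∫⁻ y, (‖K x y‖₊ : ℝ≥0∞) ∂μ) ∂volume < ⊤ := by
    rw [hswap1]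
    calc ∫⁻ y, (∫⁻ x, (‖K x y‖₊ : ℝ≥0∞) ∂volume) ∂μ
        ≤ ∫⁻ _, (ENNReal.ofReal A * J1) ∂μ := by
          refine lintegral_mono fun y => ?_
          have h := kernel_bound m hm hA K hKsupp hKbd le_rfl y
          simpa [ENNReal.rpow_one, mul_one, hJ1def] using h
      _ = (ENNReal.ofReal A * J1) * μ Set.univ := lintegral_const _
      _ < ⊤ := ENNReal.mul_lt_top (ENNReal.mul_lt_top ENNReal.ofReal_lt_top hJ1)
          (measure_lt_top μ _)
  have haeG : ∀ᵐ x ∂(volume : Measure (EuclideanSpace ℝ (Fin m))),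
      (∫⁻ y, (‖K x y‖₊ : ℝ≥0∞) ∂μ) < ⊤ :=
    ae_lt_top (Measurable.lintegral_prod_right hFmeas) hS1.ne
  have hint : ∀ᵐ x ∂(volume : Measure (EuclideanSpace ℝ (Fin m))),
      Integrable (fun y => K x y) μ := by
    filter_upwards [haeG] with x hx
    exact ⟨(hKmeas.of_uncurry_left).aestronglyMeasurable, hx⟩
  have hpq := Real.HolderConjugate.conjExponent hp1
  have hq : p.conjExponent = p / (p - 1) := rfl
  have hJensen : ∀ x : EuclideanSpace ℝ (Fin m),
      (∫⁻ y, (‖K x y‖₊ : ℝ≥0∞) ∂μ) ^ p ≤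
        (μ Set.univ) ^ δ * ∫⁻ y, (‖K x y‖₊ : ℝ≥0∞) ^ p ∂μ := by
    intro x
    have h := ENNReal.lintegral_mul_le_Lp_mul_Lq μ hpq
      (f := fun y => (‖K x y‖₊ : ℝ≥0∞)) (g := fun _ => 1)
      ((hFx x).aemeasurable) aemeasurable_const
    simp only [Pi.mul_apply, mul_one, ENNReal.one_rpow, lintegral_one] at h
    have h2 := ENNReal.rpow_le_rpow h hp0.le
    rw [ENNReal.mul_rpow_of_nonneg _ _ hp0.le, ← ENNReal.rpow_mul, ← ENNReal.rpow_mul] at h2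
    have e1 : 1 / p * p = 1 := by field_simp
    have e2 : 1 / p.conjExponent * p = δ := by
      have hpne : p ≠ 0 := hp0.ne'
      rw [hq, one_div_div, div_mul_cancel₀ _ hpne, hp]
      ring
    rw [e1, e2, ENNReal.rpow_one] at h2
    calc (∫⁻ y, (‖K x y‖₊ : ℝ≥0∞) ∂μ) ^ p
        ≤ (∫⁻ y, (‖K x y‖₊ : ℝ≥0∞) ^ p ∂μ) * (μ Set.univ) ^ δ := h2
      _ = (μ Set.univ) ^ δ * ∫⁻ y, (‖K x y‖₊ : ℝ≥0∞) ^ p ∂μ := mul_comm _ _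
  have hFpmeas : Measurable (Function.uncurry fun x y => ((‖K x y‖₊ : ℝ≥0∞)) ^ p) :=
    hFmeas.pow_const p
  have hswapp : ∫⁻ x, (∫⁻ y, (‖K x y‖₊ : ℝ≥0∞) ^ p ∂μ) ∂volume
      = ∫⁻ y, (∫⁻ x, (‖K x y‖₊ : ℝ≥0∞) ^ p ∂volume) ∂μ :=
    lintegral_lintegral_swap hFpmeas.aemeasurable
  set T := ∫⁻ x, ((‖∫ y, K x y ∂μ‖₊ : ℝ≥0∞)) ^ p ∂volume with hTdef
  have hT : T ≤ (μ Set.univ) ^ p * B := by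
    calc T ≤ ∫⁻ x, (∫⁻ y, (‖K x y‖₊ : ℝ≥0∞) ∂μ) ^ p ∂volume := by
          refine lintegral_mono fun x => ENNReal.rpow_le_rpow ?_ hp0.le
          exact enorm_integral_le_lintegral_enorm _
      _ ≤ ∫⁻ x, (μ Set.univ) ^ δ * ∫⁻ y, (‖K x y‖₊ : ℝ≥0∞) ^ p ∂μ ∂volume :=
          lintegral_mono hJensen
      _ = (μ Set.univ) ^ δ * ∫⁻ x, (∫⁻ y, (‖K x y‖₊ : ℝ≥0∞) ^ p ∂μ) ∂volume :=
          lintegral_const_mul' _ _ (ENNReal.rpow_ne_top_of_nonneg hδ.le (measure_ne_top μ _))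
      _ = (μ Set.univ) ^ δ * ∫⁻ y, (∫⁻ x, (‖K x y‖₊ : ℝ≥0∞) ^ p ∂volume) ∂μ := by
          rw [hswapp]
      _ ≤ (μ Set.univ) ^ δ * ∫⁻ _, B ∂μ := by
          refine mul_le_mul_right (lintegral_mono fun y => ?_) _
          exact kernel_bound m hm hA K hKsupp hKbd hp1.le y
      _ = (μ Set.univ) ^ δ * (B * μ Set.univ) := by rw [lintegral_const]
      _ = (μ Set.univ) ^ p * B := by
          calc (μ Set.univ) ^ δ * (B * μ Set.univ)
              = ((μ Set.univ) ^ (1 : ℝ) * (μ Set.univ) ^ δ) * B := by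
                rw [ENNReal.rpow_one]; ring
            _ = (μ Set.univ) ^ p * B := by
                rw [← ENNReal.rpow_add_of_nonneg 1 δ zero_le_one hδ.le, hp]
  have hpne0 : (ENNReal.ofReal (1 + δ)) ≠ 0 := (ENNReal.ofReal_pos.2 (by linarith)).ne'
  have heLp : eLpNorm (fun x => ∫ y, K x y ∂μ) (ENNReal.ofReal (1 + δ)) volume ≤
      ENNReal.ofReal ((B ^ (1 / p)).toReal + 1) * μ Set.univ := by
    rw [eLpNorm_eq_lintegral_rpow_enorm_toReal hpne0 ENNReal.ofReal_ne_top,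
      ENNReal.toReal_ofReal (by linarith : (0:ℝ) ≤ 1 + δ)]
    show T ^ (1 / p) ≤ _
    calc T ^ (1 / p) ≤ ((μ Set.univ) ^ p * B) ^ (1 / p) :=
          ENNReal.rpow_le_rpow hT (by positivity)
      _ = (μ Set.univ) * B ^ (1 / p) := by
          rw [ENNReal.mul_rpow_of_nonneg _ _ (by positivity), ← ENNReal.rpow_mul,
            mul_one_div_cancel hp0.ne', ENNReal.rpow_one]
      _ ≤ (μ Set.univ) * ENNReal.ofReal ((B ^ (1 / p)).toReal + 1) := by
          refine mul_le_mul_right ?_ _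
          conv_lhs => rw [← ENNReal.ofReal_toReal hBpne]
          exact ENNReal.ofReal_le_ofReal (by linarith [ENNReal.toReal_nonneg (a := B ^ (1 / p))])
      _ = ENNReal.ofReal ((B ^ (1 / p)).toReal + 1) * μ Set.univ := mul_comm _ _
  refine ⟨hint, ?_, heLp⟩
  exact ⟨((hKmeas.stronglyMeasurable).integral_prod_right).aestronglyMeasurable,
    lt_of_le_of_lt heLp (ENNReal.mul_lt_top ENNReal.ofReal_lt_top (measure_lt_top μ _))⟩
end

section
/- Assume in addition that K is continuous at every point off the diagonal {(x,x) : x ∈ ℝ^m}. Then for every bounded measurable function f : ℝ^m → ℝ the function Pf is continuous on ℝ^m, and sup |Pf| ≤ C · sup |f| for a constant C depending only on m and A. In other words, P maps L^∞ continuously into C^0. -/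
open MeasureTheory Metric Set Filter Topology

lemma aux_int (m : ℕ) (hm : 3 ≤ m) {R : ℝ} (hR : 0 < R) :
    IntegrableOn (fun z : EuclideanSpace ℝ (Fin m) => ‖z‖ ^ (2 - (m:ℝ)))
      (ball 0 R) := by
  have : Nonempty (Fin m) := ⟨⟨0, by omega⟩⟩
  set E := EuclideanSpace ℝ (Fin m)
  set p : ℝ := 2 - (m:ℝ) with hpdef
  have hm3 : (3:ℝ) ≤ (m:ℝ) := by exact_mod_cast hm
  have hp : p ≤ 0 := by simp only [hpdef]; linarith
  constructor
  · exact (by fun_prop : Measurable fun z : E => ‖z‖ ^ p).aestronglyMeasurable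
  · -- finite integral
    rw [hasFiniteIntegral_iff_ofReal
      (Eventually.of_forall fun z => Real.rpow_nonneg (norm_nonneg _) _)]
    set S : ℕ → Set E := fun n => {z : E | R / 2 ^ (n+1) ≤ ‖z‖} ∩ ball 0 (R / 2 ^ n) with hSdef
    have hcover : ball (0:E) R ⊆ {0} ∪ ⋃ n, S n := by
      intro z hz
      rcases eq_or_ne z 0 with rfl | hz0
      · exact Or.inl rfl
      · refine Or.inr (mem_iUnion.2 ?_)
        have hzpos : 0 < ‖z‖ := norm_pos_iff.2 hz0
        have hzR : ‖z‖ < R := by simpa [mem_ball_zero_iff] using hz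
        have hex : ∃ n : ℕ, R / 2 ^ (n+1) ≤ ‖z‖ := by
          obtain ⟨n, hn⟩ := pow_unbounded_of_one_lt (R / ‖z‖) one_lt_two
          have h' : R < 2 ^ n * ‖z‖ := by
            rw [div_lt_iff₀ hzpos] at hn; linarith
          refine ⟨n, ?_⟩
          rw [div_le_iff₀ (by positivity), pow_succ]
          nlinarith [pow_pos (zero_lt_two' ℝ) n]
        classical
        refine ⟨Nat.find hex, Nat.find_spec hex, ?_⟩
        rw [mem_ball_zero_iff]
        rcases Nat.eq_zero_or_pos (Nat.find hex) with hn0 | hn0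
        · rw [hn0]; simpa using hzR
        · have hmin := Nat.find_min hex (m := Nat.find hex - 1) (by omega)
          push_neg at hmin
          have heq : (Nat.find hex - 1) + 1 = Nat.find hex := by omega
          rw [heq] at hmin
          exact hmin
    have hmeasS : ∀ n, MeasurableSet (S n) := fun n =>
      ((measurableSet_le measurable_const measurable_norm).inter measurableSet_ball)
    calc ∫⁻ z in ball (0:E) R, ENNReal.ofReal (‖z‖ ^ p)
        ≤ ∫⁻ z in ({0} ∪ ⋃ n, S n : Set E), ENNReal.ofReal (‖z‖ ^ p) :=
          lintegral_mono_set hcover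
      _ ≤ (∫⁻ z in ({0}: Set E), ENNReal.ofReal (‖z‖ ^ p)) +
          ∫⁻ z in (⋃ n, S n : Set E), ENNReal.ofReal (‖z‖ ^ p) := lintegral_union_le _ _ _
      _ ≤ 0 + ∑' n, ∫⁻ z in S n, ENNReal.ofReal (‖z‖ ^ p) := by
          gcongr
          · rw [setLIntegral_measure_zero _ _ (measure_singleton _)]
          · exact lintegral_iUnion_le _ _
      _ = ∑' n, ∫⁻ z in S n, ENNReal.ofReal (‖z‖ ^ p) := by rw [zero_add]
      _ ≤ ∑' n, ENNReal.ofReal (((R/2)^p * R^m) * (1/4:ℝ)^n) * volume (ball (0:E) 1) := by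
          gcongr with n
          -- bound each shell integral
          have hc : (0:ℝ) < R / 2 ^ (n+1) := by positivity
          have hstep : ∫⁻ z in S n, ENNReal.ofReal (‖z‖ ^ p)
              ≤ ENNReal.ofReal ((R / 2 ^ (n+1)) ^ p) * volume (S n) := by
            rw [← setLIntegral_const]
            refine setLIntegral_mono' (hmeasS n) fun z hz => ?_
            exact ENNReal.ofReal_le_ofReal
              (Real.rpow_le_rpow_of_nonpos hc hz.1 hp)
          refine hstep.trans ?_
          have hvol : volume (S n) ≤ ENNReal.ofReal ((R / 2 ^ n) ^ m) * volume (ball (0:E) 1) := by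
            refine (measure_mono inter_subset_right).trans ?_
            rw [Measure.addHaar_ball _ _ (by positivity : (0:ℝ) ≤ R / 2 ^ n),
              finrank_euclideanSpace_fin]
          calc ENNReal.ofReal ((R / 2 ^ (n+1)) ^ p) * volume (S n)
              ≤ ENNReal.ofReal ((R / 2 ^ (n+1)) ^ p) *
                (ENNReal.ofReal ((R / 2 ^ n) ^ m) * volume (ball (0:E) 1)) := by gcongr
            _ = ENNReal.ofReal ((R / 2 ^ (n+1)) ^ p * (R / 2 ^ n) ^ m) * volume (ball (0:E) 1) := by
                rw [ENNReal.ofReal_mul (Real.rpow_nonneg hc.le _), mul_assoc]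
            _ = ENNReal.ofReal (((R/2)^p * R^m) * (1/4:ℝ)^n) * volume (ball (0:E) 1) := by
                congr 2
                have h1 : R / 2 ^ (n+1) = (R/2) * (1/2:ℝ)^n := by
                  rw [one_div, inv_pow, pow_succ]; ring
                have h2 : R / 2 ^ n = R * (1/2:ℝ)^n := by
                  rw [one_div, inv_pow, ← div_eq_mul_inv]
                have hhalf : (0:ℝ) < (1/2:ℝ)^n := by positivity
                have key : ((1/2:ℝ)^n) ^ p * ((1/2:ℝ)^n) ^ m = (1/4:ℝ)^n := by
                  rw [← Real.rpow_natCast ((1/2:ℝ)^n) m, ← Real.rpow_add hhalf]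
                  have : p + (m:ℝ) = 2 := by simp [hpdef]
                  rw [this, show ((2:ℝ)) = ((2:ℕ):ℝ) by norm_num, Real.rpow_natCast,
                    ← pow_mul, mul_comm n 2, pow_mul]
                  norm_num
                rw [h1, h2, Real.mul_rpow (by positivity) (by positivity), mul_pow]
                calc (R/2)^p * ((1/2:ℝ)^n)^p * (R^m * ((1/2:ℝ)^n)^m)
                    = (R/2)^p * R^m * (((1/2:ℝ)^n)^p * ((1/2:ℝ)^n)^m) := by ring
                  _ = (R/2)^p * R^m * (1/4:ℝ)^n := by rw [key]
      _ < ⊤ := by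
          rw [ENNReal.tsum_mul_right]
          refine ENNReal.mul_lt_top ?_ measure_ball_lt_top
          have hc0 : (0:ℝ) ≤ (R/2)^p * R^m := by positivity
          have hrw : ∀ n : ℕ, ENNReal.ofReal (((R/2)^p * R^m) * (1/4:ℝ)^n)
              = ENNReal.ofReal ((R/2)^p * R^m) * (ENNReal.ofReal (1/4:ℝ))^n := fun n => by
            rw [ENNReal.ofReal_mul hc0, ENNReal.ofReal_pow (by norm_num : (0:ℝ) ≤ 1/4)]
          rw [tsum_congr hrw, ENNReal.tsum_mul_left, ENNReal.tsum_geometric]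
          refine ENNReal.mul_lt_top ENNReal.ofReal_lt_top ?_
          rw [ENNReal.inv_lt_top]
          exact tsub_pos_of_lt (ENNReal.ofReal_lt_one.2 (by norm_num))

lemma aux_ind (m : ℕ) (x : EuclideanSpace ℝ (Fin m)) (R : ℝ) (q : ℝ)
    (y : EuclideanSpace ℝ (Fin m)) :
    Set.indicator (ball (0:EuclideanSpace ℝ (Fin m)) R) (fun z => ‖z‖ ^ q) (x - y)
      = Set.indicator (ball x R) (fun y => ‖x - y‖ ^ q) y := by
  by_cases h : y ∈ ball x R
  · have h' : x - y ∈ ball (0:EuclideanSpace ℝ (Fin m)) R := by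
      rw [mem_ball_zero_iff]
      rw [mem_ball, dist_eq_norm, ← norm_neg, neg_sub] at h
      exact h
    rw [Set.indicator_of_mem h', Set.indicator_of_mem h]
  · have h' : x - y ∉ ball (0:EuclideanSpace ℝ (Fin m)) R := by
      rw [mem_ball_zero_iff]
      rw [mem_ball, dist_eq_norm, ← norm_neg, neg_sub] at h
      exact h
    rw [Set.indicator_of_notMem h', Set.indicator_of_notMem h]

lemma aux_trans_int (m : ℕ) (hm : 3 ≤ m) (x : EuclideanSpace ℝ (Fin m)) {R : ℝ} (hR : 0 < R)
    (haux : IntegrableOn (fun z : EuclideanSpace ℝ (Fin m) => ‖z‖ ^ (2 - (m:ℝ))) (ball 0 R)) :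
    IntegrableOn (fun y => ‖x - y‖ ^ (2 - (m:ℝ))) (ball x R) := by
  rw [← integrable_indicator_iff measurableSet_ball]
  have h1 : Integrable (Set.indicator (ball (0:EuclideanSpace ℝ (Fin m)) R)
      (fun z => ‖z‖ ^ (2 - (m:ℝ)))) := (integrable_indicator_iff measurableSet_ball).2 haux
  have h2 := h1.comp_sub_left x
  refine h2.congr (Eventually.of_forall fun y => ?_)
  exact aux_ind m x R _ y

lemma aux_trans_eq (m : ℕ) (x : EuclideanSpace ℝ (Fin m)) (R : ℝ) :
    ∫ y in ball x R, ‖x - y‖ ^ (2 - (m:ℝ)) =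
      ∫ z in ball (0:EuclideanSpace ℝ (Fin m)) R, ‖z‖ ^ (2 - (m:ℝ)) := by
  rw [← integral_indicator measurableSet_ball, ← integral_indicator measurableSet_ball]
  rw [← integral_sub_left_eq_self
    (Set.indicator (ball (0:EuclideanSpace ℝ (Fin m)) R) (fun z => ‖z‖ ^ (2 - (m:ℝ)))) volume x]
  exact integral_congr_ae (Eventually.of_forall fun y => (aux_ind m x R _ y).symm)

noncomputable def Phi (n : ℕ) (t : ℝ) : ℝ := min 1 (max 0 (2 * t * (n+1) - 1))

lemma Phi_cont (n : ℕ) : Continuous (Phi n) := by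
  unfold Phi; fun_prop

lemma Phi_nonneg (n : ℕ) (t : ℝ) : 0 ≤ Phi n t := le_min zero_le_one (le_max_left _ _)

lemma Phi_le_one (n : ℕ) (t : ℝ) : Phi n t ≤ 1 := min_le_left _ _

lemma Phi_eq_zero (n : ℕ) {t : ℝ} (h : t ≤ 1 / (2 * (n+1))) : Phi n t = 0 := by
  unfold Phi
  have h2 : 2 * t * (n+1) - 1 ≤ 0 := by
    rw [le_div_iff₀ (by positivity)] at h
    nlinarith
  rw [max_eq_left h2, min_eq_right zero_le_one]

lemma Phi_eq_one (n : ℕ) {t : ℝ} (h : 1 / (n+1) ≤ t) : Phi n t = 1 := by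
  unfold Phi
  have h2 : 1 ≤ 2 * t * (n+1) - 1 := by
    rw [div_le_iff₀ (by positivity)] at h
    nlinarith
  rw [min_eq_left (le_trans h2 (le_max_right _ _))]

lemma Phi_pos_norm (n : ℕ) {t : ℝ} (h : Phi n t ≠ 0) : 1 / (2 * ((n:ℝ)+1)) < t := by
  by_contra hc
  push_neg at hc
  exact h (Phi_eq_zero n hc)

lemma G_cont (m : ℕ) (K : EuclideanSpace ℝ (Fin m) → EuclideanSpace ℝ (Fin m) → ℝ)
    (hKcont : ContinuousOn (Function.uncurry K)
      {p : EuclideanSpace ℝ (Fin m) × EuclideanSpace ℝ (Fin m) | p.1 ≠ p.2}) (n : ℕ) :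
    Continuous (fun q : EuclideanSpace ℝ (Fin m) × EuclideanSpace ℝ (Fin m) =>
      K q.1 q.2 * Phi n ‖q.1 - q.2‖) := by
  rw [continuous_iff_continuousAt]
  intro q
  by_cases hq : q.1 = q.2
  · have hU : IsOpen {r : EuclideanSpace ℝ (Fin m) × EuclideanSpace ℝ (Fin m) |
        ‖r.1 - r.2‖ < 1 / (2 * (n+1))} :=
      isOpen_lt (by fun_prop) continuous_const
    have hqU : q ∈ {r : EuclideanSpace ℝ (Fin m) × EuclideanSpace ℝ (Fin m) |
        ‖r.1 - r.2‖ < 1 / (2 * (n+1))} := by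
      simp only [mem_setOf_eq, hq, sub_self, norm_zero]
      positivity
    have hev : (fun r : EuclideanSpace ℝ (Fin m) × EuclideanSpace ℝ (Fin m) =>
        K r.1 r.2 * Phi n ‖r.1 - r.2‖) =ᶠ[nhds q] fun _ => 0 := by
      filter_upwards [hU.mem_nhds hqU] with r hr
      rw [Phi_eq_zero n (le_of_lt hr), mul_zero]
    exact continuousAt_const.congr hev.symm
  · have hV : IsOpen {p : EuclideanSpace ℝ (Fin m) × EuclideanSpace ℝ (Fin m) | p.1 ≠ p.2} :=
      isOpen_ne_fun continuous_fst continuous_snd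
    have h1 : ContinuousAt (Function.uncurry K) q :=
      hKcont.continuousAt (hV.mem_nhds hq)
    exact h1.mul (((Phi_cont n).comp ((continuous_fst.sub continuous_snd).norm)).continuousAt)

set_option maxHeartbeats 1000000 in
/-- Lemma 2.1: the kernel operator `P` maps `L^∞` continuously into `C^0`. -/
theorem stmt4 (m : ℕ) (hm : 3 ≤ m) (A : ℝ) (hA : 0 < A)
    (K : EuclideanSpace ℝ (Fin m) → EuclideanSpace ℝ (Fin m) → ℝ)
    (hKmeas : Measurable (Function.uncurry K))
    (hKsupp : ∀ x y, ¬(x ∈ Metric.ball (0 : EuclideanSpace ℝ (Fin m)) 1 ∧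
        y ∈ Metric.ball (0 : EuclideanSpace ℝ (Fin m)) 1) → K x y = 0)
    (hKbd : ∀ x y, x ≠ y → |K x y| ≤ A * ‖x - y‖ ^ (2 - (m : ℝ)))
    (hKcont : ContinuousOn (Function.uncurry K)
      {p : EuclideanSpace ℝ (Fin m) × EuclideanSpace ℝ (Fin m) | p.1 ≠ p.2}) :
    ∃ C : ℝ, 0 < C ∧
      ∀ f : EuclideanSpace ℝ (Fin m) → ℝ, Measurable f →
        ∀ M : ℝ, (∀ y, |f y| ≤ M) →
          Continuous (fun x => ∫ y, K x y * f y) ∧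
          ∀ x, |∫ y, K x y * f y| ≤ C * M := by
  have hnefin : Nonempty (Fin m) := ⟨⟨0, by omega⟩⟩
  set p : ℝ := 2 - (m:ℝ) with hpdef
  have hm3 : (3:ℝ) ≤ (m:ℝ) := by exact_mod_cast hm
  have hp : p ≤ 0 := by simp only [hpdef]; linarith
  have hI3int := aux_int m hm (by norm_num : (0:ℝ) < 3)
  have hI1int := aux_int m hm (by norm_num : (0:ℝ) < 1)
  set V : ℝ := (volume (ball (0:EuclideanSpace ℝ (Fin m)) 1)).toReal with hVdef
  set I3 : ℝ := ∫ z in ball (0:EuclideanSpace ℝ (Fin m)) 3, ‖z‖ ^ p with hI3def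
  have hI3nonneg : 0 ≤ I3 :=
    setIntegral_nonneg measurableSet_ball fun z _ => Real.rpow_nonneg (norm_nonneg _) _
  have hVnonneg : 0 ≤ V := ENNReal.toReal_nonneg
  have hCpos : 0 < A * (I3 + V) + 1 := by
    have := mul_nonneg hA.le (add_nonneg hI3nonneg hVnonneg); linarith
  refine ⟨A * (I3 + V) + 1, hCpos, ?_⟩
  intro f hf M hfM
  have hM0 : 0 ≤ M := le_trans (abs_nonneg _) (hfM 0)
  -- almost every y differs from a fixed point
  have hae : ∀ x : EuclideanSpace ℝ (Fin m), ∀ᵐ y : EuclideanSpace ℝ (Fin m), y ≠ x := by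
    intro x
    rw [ae_iff]
    have : {y : EuclideanSpace ℝ (Fin m) | ¬ y ≠ x} = {x} := by
      ext y; simp [Set.mem_singleton_iff]
    rw [this]
    exact measure_singleton x
  -- the master dominating function
  set h0 : EuclideanSpace ℝ (Fin m) → EuclideanSpace ℝ (Fin m) → ℝ := fun x y =>
    A * M * ((ball x 3).indicator (fun y => ‖x - y‖ ^ p) y
      + (ball (0:EuclideanSpace ℝ (Fin m)) 1).indicator (fun _ => (1:ℝ)) y) with hh0def
  have hh0nonneg : ∀ x y, 0 ≤ h0 x y := by
    intro x y
    have h1 : 0 ≤ (ball x 3).indicator (fun y => ‖x - y‖ ^ p) y :=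
      Set.indicator_nonneg (fun y _ => Real.rpow_nonneg (norm_nonneg _) _) y
    have h2 : 0 ≤ (ball (0:EuclideanSpace ℝ (Fin m)) 1).indicator (fun _ => (1:ℝ)) y :=
      Set.indicator_nonneg (fun _ _ => zero_le_one) y
    have := mul_nonneg hA.le hM0
    simp only [hh0def]
    nlinarith
  have hh0int : ∀ x, Integrable (h0 x) := by
    intro x
    refine Integrable.const_mul ?_ (A * M)
    refine Integrable.add ?_ ?_
    · exact (integrable_indicator_iff measurableSet_ball).2
        (aux_trans_int m hm x (by norm_num) hI3int)
    · exact (integrable_indicator_iff measurableSet_ball).2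
        (integrableOn_const measure_ball_lt_top.ne)
  have hh0intval : ∀ x, ∫ y, h0 x y = A * M * (I3 + V) := by
    intro x
    rw [hh0def]
    simp only
    rw [integral_const_mul]
    congr 1
    rw [integral_add
      ((integrable_indicator_iff measurableSet_ball).2 (aux_trans_int m hm x (by norm_num) hI3int))
      ((integrable_indicator_iff measurableSet_ball).2
        (integrableOn_const measure_ball_lt_top.ne)),
      integral_indicator measurableSet_ball, integral_indicator measurableSet_ball,
      aux_trans_eq m x 3, setIntegral_const, smul_eq_mul, mul_one]
    rfl
  -- key pointwise bound
  have hbd : ∀ x, ∀ᵐ y : EuclideanSpace ℝ (Fin m), ‖K x y‖ * ‖f y‖ ≤ h0 x y := by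
    intro x
    filter_upwards [hae x] with y hy
    by_cases hy1 : y ∈ ball (0:EuclideanSpace ℝ (Fin m)) 1
    · have hK := hKbd x y (Ne.symm hy)
      have hrp : 0 ≤ ‖x - y‖ ^ p := Real.rpow_nonneg (norm_nonneg _) _
      have hfy : ‖f y‖ ≤ M := by rw [Real.norm_eq_abs]; exact hfM y
      have hKn : ‖K x y‖ ≤ A * ‖x - y‖ ^ p := by rw [Real.norm_eq_abs]; exact hK
      have hLHS : ‖K x y‖ * ‖f y‖ ≤ (A * ‖x - y‖ ^ p) * M :=
        mul_le_mul hKn hfy (norm_nonneg _) (by positivity)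
      have hind2 : (ball (0:EuclideanSpace ℝ (Fin m)) 1).indicator (fun _ => (1:ℝ)) y = 1 :=
        Set.indicator_of_mem hy1 _
      by_cases hy3 : y ∈ ball x 3
      · have hind1 : (ball x 3).indicator (fun y => ‖x - y‖ ^ p) y = ‖x - y‖ ^ p :=
          Set.indicator_of_mem hy3 _
        rw [hh0def]; simp only; rw [hind1, hind2]
        nlinarith
      · have h3le : (3:ℝ) ≤ ‖x - y‖ := by
          rw [mem_ball, not_lt, dist_eq_norm, ← norm_neg, neg_sub] at hy3
          exact hy3
        have hrle : ‖x - y‖ ^ p ≤ 1 :=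
          Real.rpow_le_one_of_one_le_of_nonpos (by linarith) hp
        have hind1 : (ball x 3).indicator (fun y => ‖x - y‖ ^ p) y = 0 :=
          Set.indicator_of_notMem hy3 _
        rw [hh0def]; simp only; rw [hind1, hind2]
        nlinarith [mul_le_mul_of_nonneg_left hrle (mul_nonneg hA.le hM0)]
    · have hK0 : K x y = 0 := hKsupp x y fun hc => hy1 hc.2
      rw [hK0, norm_zero, zero_mul]
      exact hh0nonneg x y
  have hKfmeas : ∀ x, AEStronglyMeasurable (fun y => K x y * f y)
      (volume : Measure (EuclideanSpace ℝ (Fin m))) := fun x =>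
    ((hKmeas.comp measurable_prodMk_left).mul hf).aestronglyMeasurable
  have hIntKf : ∀ x, Integrable (fun y => K x y * f y) := by
    intro x
    refine (hh0int x).mono' (hKfmeas x) ?_
    filter_upwards [hbd x] with y h
    rw [norm_mul]; exact h
  -- the boundedness claim
  have hboundclaim : ∀ x, |∫ y, K x y * f y| ≤ (A * (I3 + V) + 1) * M := by
    intro x
    have h1 : ‖∫ y, K x y * f y‖ ≤ ∫ y, h0 x y := by
      refine norm_integral_le_of_norm_le (hh0int x) ?_
      filter_upwards [hbd x] with y h
      rw [norm_mul]; exact h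
    rw [Real.norm_eq_abs] at h1
    rw [hh0intval x] at h1
    nlinarith [mul_nonneg hA.le (add_nonneg hI3nonneg hVnonneg)]
  refine ⟨?_, hboundclaim⟩
  -- continuity via uniform approximation
  -- integrability of the truncated integrand
  have hKΦmeas : ∀ (n : ℕ) (x : EuclideanSpace ℝ (Fin m)),
      AEStronglyMeasurable (fun y => K x y * Phi n ‖x - y‖ * f y)
        (volume : Measure (EuclideanSpace ℝ (Fin m))) := fun n x =>
    (((hKmeas.comp measurable_prodMk_left).mul
      ((Phi_cont n).measurable.comp (measurable_const.sub measurable_id).norm)).mul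
        hf).aestronglyMeasurable
  have hIntKΦf : ∀ (n : ℕ) (x : EuclideanSpace ℝ (Fin m)),
      Integrable (fun y => K x y * Phi n ‖x - y‖ * f y) := by
    intro n x
    refine (hh0int x).mono' (hKΦmeas n x) ?_
    filter_upwards [hbd x] with y h
    rw [norm_mul, norm_mul]
    have hΦ : ‖Phi n ‖x - y‖‖ ≤ 1 := by
      rw [Real.norm_eq_abs, abs_le]
      exact ⟨by linarith [Phi_nonneg n ‖x - y‖], Phi_le_one n _⟩
    calc ‖K x y‖ * ‖Phi n ‖x - y‖‖ * ‖f y‖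
        ≤ ‖K x y‖ * 1 * ‖f y‖ := by
          nlinarith [mul_le_mul_of_nonneg_left hΦ
            (mul_nonneg (norm_nonneg (K x y)) (norm_nonneg (f y))),
            norm_nonneg (K x y), norm_nonneg (f y)]
      _ = ‖K x y‖ * ‖f y‖ := by ring
      _ ≤ h0 x y := h
  -- continuity of the truncated operators
  have hgcont : ∀ n : ℕ, Continuous fun x => ∫ y, K x y * Phi n ‖x - y‖ * f y := by
    intro n
    have hc : (0:ℝ) < 1 / (2 * ((n:ℝ)+1)) := by positivity
    have hbint : Integrable (fun y : EuclideanSpace ℝ (Fin m) =>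
        (ball (0:EuclideanSpace ℝ (Fin m)) 1).indicator
          (fun _ => A * (1 / (2 * ((n:ℝ)+1))) ^ p * M) y) :=
      (integrable_indicator_iff measurableSet_ball).2
        (integrableOn_const measure_ball_lt_top.ne)
    refine continuous_of_dominated (fun x => hKΦmeas n x) (fun x => ?_) hbint ?_
    · -- pointwise bound
      refine Eventually.of_forall fun y => ?_
      show ‖K x y * Phi n ‖x - y‖ * f y‖ ≤
        (ball (0:EuclideanSpace ℝ (Fin m)) 1).indicator
          (fun _ => A * (1 / (2 * ((n:ℝ)+1))) ^ p * M) y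
      by_cases hy1 : y ∈ ball (0:EuclideanSpace ℝ (Fin m)) 1
      · rw [Set.indicator_of_mem hy1]
        by_cases hφ : Phi n ‖x - y‖ = 0
        · rw [hφ, mul_zero, zero_mul, norm_zero]
          positivity
        · have hgt : 1 / (2 * ((n:ℝ)+1)) < ‖x - y‖ := Phi_pos_norm n hφ
          have hKn : ‖K x y‖ ≤ A * ‖x - y‖ ^ p := by
            rw [Real.norm_eq_abs]
            refine hKbd x y ?_
            intro hxy
            rw [hxy, sub_self, norm_zero] at hgt
            linarith
          have hrle : ‖x - y‖ ^ p ≤ (1 / (2 * ((n:ℝ)+1))) ^ p :=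
            Real.rpow_le_rpow_of_nonpos hc hgt.le hp
          have hΦ : ‖Phi n ‖x - y‖‖ ≤ 1 := by
            rw [Real.norm_eq_abs, abs_le]
            exact ⟨by linarith [Phi_nonneg n ‖x - y‖], Phi_le_one n _⟩
          have hfy : ‖f y‖ ≤ M := by rw [Real.norm_eq_abs]; exact hfM y
          rw [norm_mul, norm_mul]
          calc ‖K x y‖ * ‖Phi n ‖x - y‖‖ * ‖f y‖
              ≤ (A * ‖x - y‖ ^ p) * 1 * M := by
                refine mul_le_mul (mul_le_mul hKn hΦ (norm_nonneg _) (by positivity))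
                  hfy (norm_nonneg _) (by positivity)
            _ = A * ‖x - y‖ ^ p * M := by ring
            _ ≤ A * (1 / (2 * ((n:ℝ)+1))) ^ p * M := by
                nlinarith [mul_le_mul_of_nonneg_left hrle (mul_nonneg hA.le hM0)]
      · rw [Set.indicator_of_notMem hy1]
        rw [hKsupp x y fun hc' => hy1 hc'.2, zero_mul, zero_mul, norm_zero]
    · -- continuity in x for fixed y
      refine Eventually.of_forall fun y => ?_
      have := (G_cont m K hKcont n).comp
        ((continuous_id.prodMk continuous_const :
          Continuous fun x : EuclideanSpace ℝ (Fin m) => (x, y)))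
      exact this.mul continuous_const
  -- the error bound
  have hdiff : ∀ (n : ℕ) (x : EuclideanSpace ℝ (Fin m)),
      |(∫ y, K x y * f y) - ∫ y, K x y * Phi n ‖x - y‖ * f y|
        ≤ A * M * ∫ z in ball (0:EuclideanSpace ℝ (Fin m)) (1/((n:ℝ)+1)), ‖z‖ ^ p := by
    intro n x
    have hεpos : (0:ℝ) < 1/((n:ℝ)+1) := by positivity
    have hB2int : Integrable (fun y =>
        A * M * (ball x (1/((n:ℝ)+1))).indicator (fun y => ‖x - y‖ ^ p) y) :=
      ((integrable_indicator_iff measurableSet_ball).2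
        (aux_trans_int m hm x hεpos (aux_int m hm hεpos))).const_mul (A * M)
    rw [← integral_sub (hIntKf x) (hIntKΦf n x)]
    have h1 : ‖∫ y, (K x y * f y - K x y * Phi n ‖x - y‖ * f y)‖ ≤
        ∫ y, A * M * (ball x (1/((n:ℝ)+1))).indicator (fun y => ‖x - y‖ ^ p) y := by
      refine norm_integral_le_of_norm_le hB2int ?_
      filter_upwards [hae x] with y hy
      have heq : K x y * f y - K x y * Phi n ‖x - y‖ * f y
          = K x y * (1 - Phi n ‖x - y‖) * f y := by ring
      rw [heq]
      by_cases hball : y ∈ ball x (1/((n:ℝ)+1))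
      · have hmem : ‖x - y‖ < 1/((n:ℝ)+1) := by
          rw [mem_ball, dist_eq_norm, ← norm_neg, neg_sub] at hball
          exact hball
        rw [Set.indicator_of_mem hball]
        have hKn : ‖K x y‖ ≤ A * ‖x - y‖ ^ p := by
          rw [Real.norm_eq_abs]; exact hKbd x y (Ne.symm hy)
        have hΦ : ‖1 - Phi n ‖x - y‖‖ ≤ 1 := by
          rw [Real.norm_eq_abs, abs_le]
          constructor
          · linarith [Phi_le_one n ‖x - y‖]
          · linarith [Phi_nonneg n ‖x - y‖]
        have hfy : ‖f y‖ ≤ M := by rw [Real.norm_eq_abs]; exact hfM y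
        rw [norm_mul, norm_mul]
        calc ‖K x y‖ * ‖1 - Phi n ‖x - y‖‖ * ‖f y‖
            ≤ (A * ‖x - y‖ ^ p) * 1 * M := by
              refine mul_le_mul (mul_le_mul hKn hΦ (norm_nonneg _) (by positivity))
                hfy (norm_nonneg _) (by positivity)
          _ = A * M * ‖x - y‖ ^ p := by ring
      · have hge : 1/((n:ℝ)+1) ≤ ‖x - y‖ := by
          rw [mem_ball, not_lt, dist_eq_norm, ← norm_neg, neg_sub] at hball
          exact hball
        rw [Phi_eq_one n hge, sub_self, mul_zero, zero_mul, norm_zero,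
          Set.indicator_of_notMem hball, mul_zero]
    rw [Real.norm_eq_abs] at h1
    refine h1.trans ?_
    rw [integral_const_mul, integral_indicator measurableSet_ball, aux_trans_eq m x _]
  -- the small integrals tend to zero
  have hItend : Tendsto (fun n : ℕ =>
      ∫ z in ball (0:EuclideanSpace ℝ (Fin m)) (1/((n:ℝ)+1)), ‖z‖ ^ p) atTop (𝓝 0) := by
    have hmeasp : Measurable fun z : EuclideanSpace ℝ (Fin m) => ‖z‖ ^ p := by fun_prop
    have key := tendsto_integral_of_dominated_convergence
      (F := fun (n : ℕ) => (ball (0:EuclideanSpace ℝ (Fin m)) (1/((n:ℝ)+1))).indicator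
        (fun z => ‖z‖ ^ p))
      (f := fun _ => (0:ℝ))
      ((ball (0:EuclideanSpace ℝ (Fin m)) 1).indicator (fun z => ‖z‖ ^ p))
      (fun n => ((hmeasp.indicator measurableSet_ball).aestronglyMeasurable))
      ((integrable_indicator_iff measurableSet_ball).2 hI1int)
      ?_ ?_
    · have : ∫ (_ : EuclideanSpace ℝ (Fin m)), (0:ℝ) = 0 := integral_zero _ _
      rw [this] at key
      refine key.congr fun n => ?_
      rw [integral_indicator measurableSet_ball]
    · intro n
      refine Eventually.of_forall fun y => ?_
      by_cases hy : y ∈ ball (0:EuclideanSpace ℝ (Fin m)) (1/((n:ℝ)+1))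
      · have hy1 : y ∈ ball (0:EuclideanSpace ℝ (Fin m)) 1 := by
          rw [mem_ball_zero_iff] at hy ⊢
          have : 1/((n:ℝ)+1) ≤ 1 := by
            rw [div_le_one (by positivity)]; linarith [Nat.cast_nonneg (α := ℝ) n]
          linarith
        simp only [Set.indicator_of_mem hy, Set.indicator_of_mem hy1, Real.norm_eq_abs,
          abs_of_nonneg (Real.rpow_nonneg (norm_nonneg _) _)]
        exact le_refl _
      · simp only [Set.indicator_of_notMem hy, norm_zero]
        exact Set.indicator_nonneg (fun z _ => Real.rpow_nonneg (norm_nonneg _) _) y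
    · filter_upwards [hae (0:EuclideanSpace ℝ (Fin m))] with y hy
      have hypos : 0 < ‖y‖ := by
        rw [norm_pos_iff]; exact hy
      obtain ⟨N, hN⟩ := exists_nat_one_div_lt hypos
      show Tendsto (fun n : ℕ => (ball (0:EuclideanSpace ℝ (Fin m)) (1/((n:ℝ)+1))).indicator
        (fun z => ‖z‖ ^ p) y) atTop (𝓝 0)
      refine tendsto_const_nhds.congr' ?_
      rw [Filter.EventuallyEq, eventually_atTop]
      refine ⟨N, fun n hn => ?_⟩
      have : y ∉ ball (0:EuclideanSpace ℝ (Fin m)) (1/((n:ℝ)+1)) := by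
        rw [mem_ball_zero_iff, not_lt]
        have h2 : 1/((n:ℝ)+1) ≤ 1/((N:ℝ)+1) := by
          have hNn : (N:ℝ) ≤ (n:ℝ) := by exact_mod_cast hn
          refine one_div_le_one_div_of_le (by positivity) (by linarith)
        linarith
      rw [Set.indicator_of_notMem this]
  -- uniform convergence
  have hunif : TendstoUniformly (fun (n : ℕ) x => ∫ y, K x y * Phi n ‖x - y‖ * f y)
      (fun x => ∫ y, K x y * f y) atTop := by
    rw [Metric.tendstoUniformly_iff]
    intro δ hδ
    have h2 : Tendsto (fun n : ℕ => A * M *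
        ∫ z in ball (0:EuclideanSpace ℝ (Fin m)) (1/((n:ℝ)+1)), ‖z‖ ^ p) atTop (𝓝 0) := by
      have := hItend.const_mul (A * M)
      simpa using this
    filter_upwards [h2.eventually (gt_mem_nhds hδ)] with n hn x
    rw [Real.dist_eq]
    exact lt_of_le_of_lt (hdiff n x) hn
  exact hunif.continuous (Eventually.of_forall hgcont).frequently
end

section
/- Let P : ℂ^k → ℂ be a homogeneous polynomial of degree d, let m, n, s be natural numbers with d + s ≥ m + n + 1, and let R > 0. Consider the function g(y) := P(y) · y₁^{−m} · (conj y₁)^{−n}, which is differentiable in the real sense at every y with y₁ ≠ 0. Then there exists a constant A > 0 such that for every y ∈ ℂ^k with y₁ ≠ 0, |y_j| ≤ 2|y₁| for all j = 1, …, k, and ‖y‖ ≤ R, the real Fréchet derivative of g satisfies ‖Dg(y)‖ ≤ A · ‖y‖^{−s}. -/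
open MvPolynomial

lemma aux_eval_smul {k d : ℕ} (P : MvPolynomial (Fin k) ℂ) (hP : P.IsHomogeneous d)
    (c : ℂ) (x : Fin k → ℂ) :
    MvPolynomial.eval (fun j => c * x j) P = c ^ d * MvPolynomial.eval x P := by
  rw [eval_eq', eval_eq', Finset.mul_sum]
  refine Finset.sum_congr rfl fun α hα => ?_
  have h1 : Finsupp.weight 1 α = d := hP (mem_support_iff.mp hα)
  have hdeg : ∑ i, α i = d := by
    rw [← h1, show Finsupp.weight 1 α = Finsupp.weight (fun _ => 1) α from rfl,
      ← Finsupp.degree_eq_weight_one, Finsupp.degree_apply]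
    exact (Finset.sum_subset (Finset.subset_univ _)
      (fun i _ hi => Finsupp.notMem_support_iff.mp hi)).symm
  calc P.coeff α * ∏ i, (c * x i) ^ α i
      = P.coeff α * ((∏ i, c ^ α i) * ∏ i, x i ^ α i) := by
        rw [← Finset.prod_mul_distrib]; simp_rw [mul_pow]
    _ = c ^ d * (P.coeff α * ∏ i, x i ^ α i) := by
        rw [Finset.prod_pow_eq_pow_sum, hdeg]; ring

lemma aux_analytic {k : ℕ} (P : MvPolynomial (Fin k) ℂ) (z : EuclideanSpace ℂ (Fin k)) :
    AnalyticAt ℝ (fun z : EuclideanSpace ℂ (Fin k) => MvPolynomial.eval (fun j => z j) P) z := by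
  have h := AnalyticAt.aeval_mvPolynomial (𝕜 := ℝ)
    (f := fun (z : EuclideanSpace ℂ (Fin k)) (j : Fin k) => z j) (z := z)
    (fun i => ((EuclideanSpace.proj i (𝕜 := ℂ)).restrictScalars ℝ).analyticAt z) P
  have he : ∀ (f : Fin k → ℂ) (p : MvPolynomial (Fin k) ℂ), aeval f p = eval f p := fun f p => by
    rw [aeval_def, Algebra.algebraMap_self]; rfl
  simpa only [he] using h


/-- The gradient estimate of Lemma 3.1: the real Fréchet derivative of
`g(y) = P(y)·y₁^{-m}·(conj y₁)^{-n}`, with `P` homogeneous of degree `d` and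
`d + s ≥ m + n + 1`, is bounded by `A·‖y‖^{-s}` on the sector `|y_j| ≤ 2|y₁|`, `‖y‖ ≤ R`. -/
theorem stmt11 (k : ℕ) (hk : 0 < k) (d m n s : ℕ) (hds : m + n + 1 ≤ d + s)
    (P : MvPolynomial (Fin k) ℂ) (hP : P.IsHomogeneous d) (R : ℝ) (hR : 0 < R) :
    ∃ A : ℝ, 0 < A ∧ ∀ y : EuclideanSpace ℂ (Fin k),
      y ⟨0, hk⟩ ≠ 0 →
      (∀ j : Fin k, ‖y j‖ ≤ 2 * ‖y ⟨0, hk⟩‖) →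
      ‖y‖ ≤ R →
      DifferentiableAt ℝ
        (fun z : EuclideanSpace ℂ (Fin k) =>
          MvPolynomial.eval (fun j => z j) P * (z ⟨0, hk⟩) ^ (-(m : ℤ)) *
            (starRingEnd ℂ (z ⟨0, hk⟩)) ^ (-(n : ℤ))) y ∧
      ‖fderiv ℝ
        (fun z : EuclideanSpace ℂ (Fin k) =>
          MvPolynomial.eval (fun j => z j) P * (z ⟨0, hk⟩) ^ (-(m : ℤ)) *
            (starRingEnd ℂ (z ⟨0, hk⟩)) ^ (-(n : ℤ))) y‖ ≤ A / ‖y‖ ^ s := by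
  classical
  set E := EuclideanSpace ℂ (Fin k)
  set i0 : Fin k := ⟨0, hk⟩ with hi0
  set g : E → ℂ := fun z =>
    MvPolynomial.eval (fun j => z j) P * (z i0) ^ (-(m : ℤ)) *
      (starRingEnd ℂ (z i0)) ^ (-(n : ℤ)) with hg_def
  set U : Set E := {z | z i0 ≠ 0} with hU_def
  have hcont : ∀ i : Fin k, Continuous fun z : E => z i := fun i =>
    ((EuclideanSpace.proj i (𝕜 := ℂ)).restrictScalars ℝ).continuous
  have hUopen : IsOpen U := isOpen_compl_singleton.preimage (hcont i0)
  -- smoothness of g on U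
  have hgsmooth : ContDiffOn ℝ (⊤ : ℕ∞) g U := by
    have hgeq : g = fun z : E =>
        MvPolynomial.eval (fun j => z j) P * ((z i0) ^ m)⁻¹ *
          ((starRingEnd ℂ (z i0)) ^ n)⁻¹ := by
      funext z
      simp only [hg_def, zpow_neg, zpow_natCast]
    rw [hgeq]
    intro z hz
    have hz0 : z i0 ≠ 0 := hz
    have hproj : ContDiffAt ℝ (⊤ : ℕ∞) (fun z : E => z i0) z :=
      ((EuclideanSpace.proj i0 (𝕜 := ℂ)).restrictScalars ℝ).contDiff.contDiffAt
    have hconj : ContDiffAt ℝ (⊤ : ℕ∞) (fun z : E => starRingEnd ℂ (z i0)) z := by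
      exact (Complex.conjCLE.toContinuousLinearMap.contDiff.comp
        ((EuclideanSpace.proj i0 (𝕜 := ℂ)).restrictScalars ℝ).contDiff).contDiffAt
    have h1 : ContDiffAt ℝ (⊤ : ℕ∞) (fun z : E => MvPolynomial.eval (fun j => z j) P) z :=
      (aux_analytic P z).contDiffAt
    have h2 : ContDiffAt ℝ (⊤ : ℕ∞) (fun z : E => ((z i0) ^ m)⁻¹) z :=
      (hproj.pow m).inv (pow_ne_zero _ hz0)
    have h3 : ContDiffAt ℝ (⊤ : ℕ∞) (fun z : E => ((starRingEnd ℂ (z i0)) ^ n)⁻¹) z :=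
      (hconj.pow n).inv (pow_ne_zero _ (by simpa using hz0))
    exact ((h1.mul h2).mul h3).contDiffWithinAt
  have hfc : ContinuousOn (fderiv ℝ g) U :=
    hgsmooth.continuousOn_fderiv_of_isOpen hUopen (mod_cast le_top)
  -- the compact sector on the sphere
  set K : Set E := {u | ‖u‖ = 1 ∧ ∀ j, ‖u j‖ ≤ 2 * ‖u i0‖} with hK_def
  have hKU : K ⊆ U := by
    rintro u ⟨hu1, hu2⟩ h0
    have hz : ∀ j, u j = 0 := fun j => by
      have h := hu2 j
      rw [h0] at h
      exact norm_eq_zero.mp (le_antisymm (by simpa using h) (norm_nonneg _))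
    have hu0 : u = 0 := PiLp.ext hz
    rw [hu0] at hu1
    simp at hu1
  have hKc : IsCompact K := by
    have hclosed : IsClosed K := by
      have h1 : IsClosed {u : E | ‖u‖ = 1} := isClosed_eq continuous_norm continuous_const
      have h2 : IsClosed {u : E | ∀ j, ‖u j‖ ≤ 2 * ‖u i0‖} := by
        have : {u : E | ∀ j, ‖u j‖ ≤ 2 * ‖u i0‖} =
            ⋂ j, {u : E | ‖u j‖ ≤ 2 * ‖u i0‖} := by
          ext u; simp
        rw [this]
        exact isClosed_iInter fun j => isClosed_le
          (continuous_norm.comp (hcont j))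
          (continuous_const.mul (continuous_norm.comp (hcont i0)))
      exact h1.inter h2
    have hsub : K ⊆ Metric.closedBall 0 1 := fun u hu => by
      simp [Metric.mem_closedBall, dist_zero_right, hu.1.le]
    exact (isCompact_closedBall (0 : E) 1).of_isClosed_subset hclosed hsub
  obtain ⟨C, hC⟩ := hKc.exists_bound_of_continuousOn (hfc.mono hKU)
  set C' : ℝ := max C 0 + 1 with hC'_def
  have hC'pos : 0 < C' := by positivity
  set M : ℝ := max R 1 with hM_def
  have hM1 : 1 ≤ M := le_max_right R 1
  set e' : ℕ := d + s - (m + n + 1) with he'_def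
  refine ⟨C' * M ^ e', by positivity, fun y hy0 hysec hyR => ?_⟩
  have hyU : y ∈ U := hy0
  set t : ℝ := ‖y‖ with ht_def
  have hy_ne : y ≠ 0 := fun h => hy0 (by rw [h]; rfl)
  have ht : 0 < t := norm_pos_iff.mpr hy_ne
  set u : E := (t⁻¹ : ℝ) • y with hu_def
  have hu_coord : ∀ j, u j = ((t : ℂ))⁻¹ * y j := fun j => by
    simp [hu_def, PiLp.smul_apply, Complex.real_smul, Complex.ofReal_inv]
  have hu_norm : ‖u‖ = 1 := by
    rw [hu_def, norm_smul, norm_inv, Real.norm_of_nonneg ht.le, inv_mul_cancel₀ ht.ne']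
  have habs : ∀ j, ‖u j‖ = t⁻¹ * ‖y j‖ := fun j => by
    rw [hu_coord j, norm_mul, norm_inv, Complex.norm_real, Real.norm_of_nonneg ht.le]
  have huK : u ∈ K := by
    refine ⟨hu_norm, fun j => ?_⟩
    rw [habs j, habs i0]
    calc t⁻¹ * ‖y j‖ ≤ t⁻¹ * (2 * ‖y i0‖) :=
          mul_le_mul_of_nonneg_left (hysec j) (inv_nonneg.mpr ht.le)
      _ = 2 * (t⁻¹ * ‖y i0‖) := by ring
  have huU : u ∈ U := hKU huK
  -- derivative at u
  have hDu : HasFDerivAt g (fderiv ℝ g u) u :=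
    ((hgsmooth.contDiffAt (hUopen.mem_nhds huU)).differentiableAt (by simp)).hasFDerivAt
  set D := fderiv ℝ g u with hD_def
  -- scaling identity
  set c : ℂ := (t : ℂ) with hc_def
  have hcne : c ≠ 0 := by
    simp [hc_def, Complex.ofReal_ne_zero, ht.ne']
  set b : ℂ := c ^ (d : ℤ) * c ^ (-(m : ℤ)) * c ^ (-(n : ℤ)) with hb_def
  have hscale : ∀ w : E, g (t • w) = b * g w := by
    intro w
    have hcoord : ∀ j, (t • w) j = c * w j := fun j => by
      rw [hc_def]
      show t • w j = (t : ℂ) * w j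
      exact Complex.real_smul
    simp only [hg_def, hcoord]
    rw [aux_eval_smul P hP c, map_mul (starRingEnd ℂ), mul_zpow, mul_zpow, hb_def]
    have : (starRingEnd ℂ) c = c := by simp [hc_def, Complex.conj_ofReal]
    rw [this, ← zpow_natCast c d]
    ring
  have hfun : (fun z : E => b * g (t⁻¹ • z)) = g := by
    funext z
    have := hscale (t⁻¹ • z)
    rw [smul_inv_smul₀ ht.ne'] at this
    rw [← this]
  -- derivative transport
  have hlin : HasFDerivAt (fun z : E => (t⁻¹ : ℝ) • z)
      ((t⁻¹ : ℝ) • ContinuousLinearMap.id ℝ E) y :=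
    ((t⁻¹ : ℝ) • ContinuousLinearMap.id ℝ E).hasFDerivAt
  have hcomp : HasFDerivAt (fun z : E => g ((t⁻¹ : ℝ) • z)) ((t⁻¹ : ℝ) • D) y := by
    have h := hDu.comp y hlin
    have : D.comp ((t⁻¹ : ℝ) • ContinuousLinearMap.id ℝ E) = (t⁻¹ : ℝ) • D := by
      ext v
      simp
    rwa [this] at h
  have hDy : HasFDerivAt g (b • ((t⁻¹ : ℝ) • D)) y := by
    have h := hcomp.const_mul b
    rwa [hfun] at h
  constructor
  · exact hDy.differentiableAt
  · rw [hDy.fderiv]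
    have hb_abs : ‖b‖ = t ^ (d : ℤ) * t ^ (-(m : ℤ)) * t ^ (-(n : ℤ)) := by
      rw [hb_def]
      simp only [norm_mul, norm_zpow, hc_def, Complex.norm_real,
        Real.norm_of_nonneg ht.le]
    have hDnorm : ‖b • ((t⁻¹ : ℝ) • D)‖ = ‖b‖ * (t⁻¹ * ‖D‖) := by
      rw [norm_smul b ((t⁻¹ : ℝ) • D), norm_smul (t⁻¹ : ℝ) D, norm_inv, Real.norm_of_nonneg ht.le]
    rw [hDnorm, hb_abs]
    rw [div_eq_mul_inv]
    have hDC : ‖D‖ ≤ C' := le_trans (hC u huK) (by rw [hC'_def]; linarith [le_max_left C 0])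
    have hpow : t ^ (d : ℤ) * t ^ (-(m : ℤ)) * t ^ (-(n : ℤ)) * t⁻¹ = t ^ e' * (t ^ s)⁻¹ := by
      rw [← zpow_neg_one t, ← zpow_natCast t e', ← zpow_natCast t s, ← zpow_neg, ← zpow_add₀ ht.ne',
        ← zpow_add₀ ht.ne', ← zpow_add₀ ht.ne', ← zpow_add₀ ht.ne']
      congr 1
      have : m + n + 1 ≤ d + s := hds
      push_cast [he'_def]
      omega
    calc t ^ (d : ℤ) * t ^ (-(m : ℤ)) * t ^ (-(n : ℤ)) * (t⁻¹ * ‖D‖)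
        = (t ^ (d : ℤ) * t ^ (-(m : ℤ)) * t ^ (-(n : ℤ)) * t⁻¹) * ‖D‖ := by ring
      _ = t ^ e' * (t ^ s)⁻¹ * ‖D‖ := by rw [hpow]
      _ = (t ^ e' * ‖D‖) * (t ^ s)⁻¹ := by ring
      _ ≤ (M ^ e' * C') * (t ^ s)⁻¹ := by
          apply mul_le_mul_of_nonneg_right _ (by positivity)
          exact mul_le_mul (pow_le_pow_left₀ ht.le (le_trans hyR (le_max_left R 1)) e')
            hDC (norm_nonneg _) (by positivity)
      _ = C' * M ^ e' * (t ^ s)⁻¹ := by ring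
end
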